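/- arXiv:1408.1057 — 2 statements merged into one kernel-verified Lean document; each statement's English description precedes it below -/
import Mathlib

section
/- Let ω ∈ ℂ with |ω| = 1, ω not real, and s ∈ 𝔻, s ≠ 0, and let φ(z) = ω(s−z)/(1−s̄z). Then φ(0) = ωs and φ²(0) = ωs(1−ω)/(1−|s|²ω), and these two complex numbers are linearly independent over ℝ. -/
/-! With `r = ‖s‖²` one has `φ(φ(0)) = φ(0) · (1 - ω) / (1 - rω)`, and
`Im ((1 - ω) / (1 - rω)) = (r - 1) Im ω / |1 - rω|²`, which is nonzero as `ω ∉ ℝ` and `r < 1`.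
Two complex numbers `z ≠ 0` and `z w` are `ℝ`-independent exactly when `w ∉ ℝ`. -/

noncomputable section

/-- The disk automorphism `φ(z) = ω(s-z)/(1-s̄z)`. -/
def diskAut (ω s z : ℂ) : ℂ := ω * (s - z) / (1 - (starRingEnd ℂ) s * z)

open Complex

theorem diskAut_zero (ω s : ℂ) : diskAut ω s 0 = ω * s := by
  simp [diskAut]

theorem diskAut_mul_self (ω s : ℂ) :
    diskAut ω s (ω * s) = ω * s * (1 - ω) / (1 - (‖s‖ : ℂ) ^ 2 * ω) := by
  rw [diskAut, ← conj_mul' s]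
  ring_nf

theorem Complex.linearIndependent_pair_mul {z w : ℂ} (hz : z ≠ 0) (hw : w.im ≠ 0) :
    LinearIndependent ℝ ![z, z * w] := by
  have hw₀ : w ≠ 0 := fun h => hw (by simp [h])
  rw [linearIndependent_fin2]
  refine ⟨by simpa using mul_ne_zero hz hw₀, fun a ha => ?_⟩
  have hreal : (a : ℂ) * w = 1 := mul_left_cancel₀ hz <| by
    simp only [Matrix.cons_val_one, Matrix.cons_val_zero, real_smul] at ha
    linear_combination ha
  have him : a * w.im = 0 := by simpa using congrArg im hreal
  have ha₀ : a = 0 := (mul_eq_zero.1 him).resolve_right hw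
  simp [ha₀] at hreal

theorem Complex.one_sub_ofReal_mul_ne_zero {ω : ℂ} (hω : ω.im ≠ 0) (r : ℝ) :
    1 - r * ω ≠ 0 := by
  intro h
  have him : r * ω.im = 0 := by simpa using congrArg im h
  have hr : r = 0 := (mul_eq_zero.1 him).resolve_right hω
  simp [hr] at h

theorem Complex.im_one_sub_div_one_sub_ofReal_mul (ω : ℂ) (r : ℝ) :
    ((1 - ω) / (1 - r * ω)).im = (r - 1) * ω.im / normSq (1 - r * ω) := by
  simp only [div_im, sub_re, sub_im, one_re, one_im, re_ofReal_mul, im_ofReal_mul]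
  ring

theorem orbit_points_linearIndependent_general (ω s : ℂ) (hω' : ω.im ≠ 0)
    (hs : s ≠ 0) (hs' : ‖s‖ < 1) :
    diskAut ω s 0 = ω * s ∧
    diskAut ω s (diskAut ω s 0) = ω * s * (1 - ω) / (1 - (‖s‖ : ℂ) ^ 2 * ω) ∧
    LinearIndependent ℝ ![diskAut ω s 0, diskAut ω s (diskAut ω s 0)] := by
  have horbit : diskAut ω s (diskAut ω s 0) = ω * s * (1 - ω) / (1 - (‖s‖ : ℂ) ^ 2 * ω) := by
    rw [diskAut_zero, diskAut_mul_self]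
  refine ⟨diskAut_zero ω s, horbit, ?_⟩
  rw [horbit, diskAut_zero, mul_div_assoc]
  have hωs : ω * s ≠ 0 := mul_ne_zero (fun h => hω' (by simp [h])) hs
  refine linearIndependent_pair_mul hωs ?_
  have hcast : (‖s‖ : ℂ) ^ 2 = ((‖s‖ ^ 2 : ℝ) : ℂ) := by push_cast; rfl
  have hnorm : ‖s‖ ^ 2 - 1 ≠ 0 := (sub_neg.2 (pow_lt_one₀ (norm_nonneg s) hs' two_ne_zero)).ne
  rw [hcast, im_one_sub_div_one_sub_ofReal_mul]
  exact div_ne_zero (mul_ne_zero hnorm hω') (normSq_pos.2 (one_sub_ofReal_mul_ne_zero hω' _)).ne'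

theorem orbit_points_linearIndependent (ω s : ℂ) (hω : ‖ω‖ = 1) (hω' : ω.im ≠ 0)
    (hs : s ≠ 0) (hs' : ‖s‖ < 1) :
    diskAut ω s 0 = ω * s ∧
    diskAut ω s (diskAut ω s 0) = ω * s * (1 - ω) / (1 - (‖s‖ : ℂ) ^ 2 * ω) ∧
    LinearIndependent ℝ ![diskAut ω s 0, diskAut ω s (diskAut ω s 0)] :=
  orbit_points_linearIndependent_general ω s hω' hs hs'
end
end

section
/- Let A be a unital C*-algebra with a closed *-subalgebra 𝒜 (not necessarily unital) and a closed unital *-subalgebra B, and suppose there is a character χ : B → ℂ such that b·a = χ(b)·a = a·b for all b ∈ B, a ∈ 𝒜, and such that b + a = 0 (b ∈ B, a ∈ 𝒜) implies b = 0 and a = 0. Then the set C = {b + a : b ∈ B, a ∈ 𝒜} is a *-subalgebra of A, and C is *-isomorphic to the minimal unitization of (ker χ) ⊕ 𝒜 via the map sending ((b − χ(b)·1, a), χ(b)) to b + a. -/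
set_option synthInstance.maxHeartbeats 1000000
set_option maxHeartbeats 1000000

noncomputable section

variable {A : Type*} [CStarAlgebra A]

/-- The kernel of a character `χ : B → ℂ`, as a non-unital star subalgebra of `B`. -/
def charKer {B : StarSubalgebra ℂ A} (χ : B →⋆ₐ[ℂ] ℂ) : NonUnitalStarSubalgebra ℂ B where
  carrier := {b | χ b = 0}
  add_mem' {x y} hx hy := by simp_all [Set.mem_setOf_eq, map_add]
  mul_mem' {x y} hx hy := by simp_all [Set.mem_setOf_eq, map_mul]
  zero_mem' := by simp
  smul_mem' c x hx := by simp_all [Set.mem_setOf_eq, map_smul]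
  star_mem' {x} hx := by simp_all [Set.mem_setOf_eq, map_star]


/-! Since `ker χ` annihilates `𝒜` on both sides, `(k, a) ↦ k + a` is a star homomorphism on
`ker χ × 𝒜`, and its unital extension `λ ↦ λ • 1` to the unitization lands in `B + 𝒜`. It is onto
because `b = χ b • 1 + (b - χ b • 1)` with `b - χ b • 1 ∈ ker χ`, and it is injective because an
element `λ • 1 + k + a` of the kernel has `λ • 1 + k = 0` and `a = 0` by directness of the sum,
and applying `χ` to the first equation gives `λ = 0`, hence `k = 0`. -/

namespace NonUnitalStarAlgHom

variable {R S T C : Type*} [Monoid R]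
  [NonUnitalNonAssocSemiring S] [DistribMulAction R S] [Star S]
  [NonUnitalNonAssocSemiring T] [DistribMulAction R T] [Star T]
  [NonUnitalNonAssocSemiring C] [DistribMulAction R C] [StarAddMonoid C]

def coprodOfOrthogonal (f : S →⋆ₙₐ[R] C) (g : T →⋆ₙₐ[R] C)
    (hfg : ∀ s t, f s * g t = 0) (hgf : ∀ s t, g t * f s = 0) : S × T →⋆ₙₐ[R] C where
  toFun p := f p.1 + g p.2
  map_smul' r p := by simp [smul_add]
  map_zero' := by simp
  map_add' p q := by simp only [Prod.fst_add, Prod.snd_add, map_add]; abel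
  map_mul' p q := by simp [add_mul, mul_add, hfg, hgf]
  map_star' p := by simp [map_star, star_add]

end NonUnitalStarAlgHom

section

variable {Asub : NonUnitalStarSubalgebra ℂ A} {B : StarSubalgebra ℂ A} {χ : B →⋆ₐ[ℂ] ℂ}

theorem mem_charKer_iff {b : B} : b ∈ charKer χ ↔ χ b = 0 := Iff.rfl

theorem sub_algebraMap_mem_charKer (b : B) : b - algebraMap ℂ B (χ b) ∈ charKer χ := by
  simp [mem_charKer_iff, AlgHomClass.commutes]

theorem mul_eq_zero_and_mul_eq_zero_of_mem_charKer
    (hcomm : ∀ (b : B) (a : A), a ∈ Asub → (b : A) * a = χ b • a ∧ a * (b : A) = χ b • a)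
    {k : B} (hk : k ∈ charKer χ) {a : A} (ha : a ∈ Asub) : (k : A) * a = 0 ∧ a * k = 0 := by
  simpa [mem_charKer_iff.mp hk] using hcomm k a ha

variable (horth : ∀ k ∈ charKer χ, ∀ a ∈ Asub, (k : A) * a = 0 ∧ a * (k : A) = 0)

variable (Asub χ) in
def unitizationToSum : Unitization ℂ (charKer χ × Asub) →⋆ₐ[ℂ] A :=
  Unitization.starLift <| NonUnitalStarAlgHom.coprodOfOrthogonal
    ((B.subtype : B →⋆ₙₐ[ℂ] A).comp (NonUnitalStarSubalgebraClass.subtype (charKer χ)))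
    (NonUnitalStarSubalgebraClass.subtype Asub)
    (fun k a => (horth k k.2 a a.2).1) (fun k a => (horth k k.2 a a.2).2)

theorem unitizationToSum_apply (x : Unitization ℂ (charKer χ × Asub)) :
    unitizationToSum Asub χ horth x = x.fst • (1 : A) + (((x.snd.1 : B) : A) + x.snd.2) := by
  rw [← Algebra.algebraMap_eq_smul_one]
  rfl

theorem unitizationToSum_algebraMap (r : ℂ) :
    unitizationToSum Asub χ horth (algebraMap ℂ _ r) = r • (1 : A) :=
  (AlgHomClass.commutes _ r).trans (Algebra.algebraMap_eq_smul_one r)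

theorem unitizationToSum_inr (p : charKer χ × Asub) :
    unitizationToSum Asub χ horth (Unitization.inr p) = ((p.1 : B) : A) + p.2 := by
  simp [unitizationToSum_apply]

theorem unitizationToSum_injective
    (hzero : ∀ (b : B) (a : A), a ∈ Asub → (b : A) + a = 0 → (b : A) = 0 ∧ a = 0) :
    Function.Injective (unitizationToSum Asub χ horth) := by
  refine (injective_iff_map_eq_zero _).2 fun x hx => ?_
  set b : B := x.fst • 1 + x.snd.1 with hb_def
  obtain ⟨hb, ha⟩ := hzero b x.snd.2 x.snd.2.2 <| by
    rw [← hx, unitizationToSum_apply, ← add_assoc]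
    rfl
  have hb : b = 0 := Subtype.ext hb
  have hfst : x.fst = 0 := by
    simpa [hb, mem_charKer_iff.mp x.snd.1.2] using (congrArg χ hb_def).symm
  have hk : x.snd.1 = 0 := by
    rw [hfst, zero_smul, zero_add, hb] at hb_def
    exact Subtype.ext hb_def.symm
  exact Unitization.ext hfst (Prod.ext hk (Subtype.ext ha))

theorem coe_range_unitizationToSum :
    ((unitizationToSum Asub χ horth).range : Set A) = {x | ∃ b ∈ B, ∃ a ∈ Asub, x = b + a} := by
  ext x
  constructor
  · rintro ⟨y, rfl⟩
    refine ⟨_, (y.fst • 1 + y.snd.1 : B).2, _, y.snd.2.2, ?_⟩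
    simp [unitizationToSum_apply, add_assoc]
  · rintro ⟨b, hb, a, ha, rfl⟩
    let b' : B := ⟨b, hb⟩
    have hpre : unitizationToSum Asub χ horth (algebraMap ℂ _ (χ b') +
        Unitization.inr (⟨_, sub_algebraMap_mem_charKer b'⟩, ⟨a, ha⟩)) = b + a := by
      rw [map_add, unitizationToSum_algebraMap, unitizationToSum_inr]
      push_cast [Algebra.algebraMap_eq_smul_one]
      abel
    exact ⟨_, hpre⟩

end

theorem sum_set_is_unitization_general
    (Asub : NonUnitalStarSubalgebra ℂ A)
    (B : StarSubalgebra ℂ A)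
    (χ : B →⋆ₐ[ℂ] ℂ)
    (hcomm : ∀ (b : B) (a : A), a ∈ Asub →
      (b : A) * a = χ b • a ∧ a * (b : A) = χ b • a)
    (hzero : ∀ (b : B) (a : A), a ∈ Asub → (b : A) + a = 0 → (b : A) = 0 ∧ a = 0) :
    ∃ C : StarSubalgebra ℂ A,
      (C : Set A) = {x | ∃ b ∈ B, ∃ a ∈ Asub, x = b + a} ∧
      ∃ Φ : Unitization ℂ (charKer χ × Asub) ≃⋆ₐ[ℂ] C,
        (∀ lam : ℂ, (Φ (algebraMap ℂ _ lam) : A) = lam • 1) ∧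
        ∀ (b : B) (hb : χ b = 0) (a : Asub),
          (Φ (Unitization.inr ((⟨b, hb⟩, a) : charKer χ × Asub)) : A) = (b : A) + (a : A) := by
  have horth : ∀ k ∈ charKer χ, ∀ a ∈ Asub, (k : A) * a = 0 ∧ a * (k : A) = 0 :=
    fun _ hk _ ha => mul_eq_zero_and_mul_eq_zero_of_mem_charKer hcomm hk ha
  exact ⟨_, coe_range_unitizationToSum horth,
    StarAlgEquiv.ofInjective _ (unitizationToSum_injective horth hzero),
    unitizationToSum_algebraMap horth, fun _ _ _ => unitizationToSum_inr horth _⟩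

theorem sum_set_is_unitization
    (Asub : NonUnitalStarSubalgebra ℂ A) (hAc : IsClosed (Asub : Set A))
    (B : StarSubalgebra ℂ A) (hBc : IsClosed (B : Set A))
    (χ : B →⋆ₐ[ℂ] ℂ)
    (hcomm : ∀ (b : B) (a : A), a ∈ Asub →
      (b : A) * a = χ b • a ∧ a * (b : A) = χ b • a)
    (hzero : ∀ (b : B) (a : A), a ∈ Asub → (b : A) + a = 0 → (b : A) = 0 ∧ a = 0) :
    ∃ C : StarSubalgebra ℂ A,
      (C : Set A) = {x | ∃ b ∈ B, ∃ a ∈ Asub, x = b + a} ∧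
      ∃ Φ : Unitization ℂ (charKer χ × Asub) ≃⋆ₐ[ℂ] C,
        (∀ lam : ℂ, (Φ (algebraMap ℂ _ lam) : A) = lam • 1) ∧
        ∀ (b : B) (hb : χ b = 0) (a : Asub),
          (Φ (Unitization.inr ((⟨b, hb⟩, a) : charKer χ × Asub)) : A) = (b : A) + (a : A) :=
  sum_set_is_unitization_general Asub B χ hcomm hzero
end
end
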